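/- Let n, k be positive integers with 1 ≤ k ≤ n. The set of extreme points of the convex set I_k equals {v v* : v ∈ ℂ^n, ‖v‖_2 = 1, and v has at most k nonzero entries} ∪ {0}. -/

import Mathlib

open Matrix BigOperators Finset ComplexOrder

noncomputable section

/-- The number of nonzero entries of a vector in `ℂ^n`. -/
def suppCard {n : ℕ} (v : Fin n → ℂ) : ℕ :=
  (Finset.univ.filter fun i => v i ≠ 0).card

/-- A matrix `X` is `k`-incoherent if it can be written as `∑ vᵢ vᵢ*` where each `vᵢ`
has at most `k` nonzero entries. -/
def KIncoherent {n : ℕ} (k : ℕ) (X : Matrix (Fin n) (Fin n) ℂ) : Prop :=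
  ∃ (m : ℕ) (v : Fin m → (Fin n → ℂ)),
    (∀ i, suppCard (v i) ≤ k) ∧ X = ∑ i, vecMulVec (v i) (star (v i))

/-- The set `I_k` of positive semidefinite, `k`-incoherent matrices with trace at most `1`. -/
def Ik (n k : ℕ) : Set (Matrix (Fin n) (Fin n) ℂ) :=
  {X | X.PosSemidef ∧ KIncoherent k X ∧ X.trace.re ≤ 1}

/-- The Gram matrix of a list of vectors in `ℂ^d`. -/
def gramMatrix {n d : ℕ} (ψ : Fin n → (Fin d → ℂ)) : Matrix (Fin n) (Fin n) ℂ :=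
  Matrix.of fun i j => star (ψ i) ⬝ᵥ ψ j

/-- A list of states `ψ₁, …, ψₙ` is `k`-learnable if there is a POVM indexed by the
`k`-element subsets of `{1, …, n}` such that `⟨ψᵢ, M_S ψᵢ⟩ = 0` whenever `i ∉ S`. -/
def KLearnable {n d : ℕ} (k : ℕ) (ψ : Fin n → (Fin d → ℂ)) : Prop :=
  ∃ M : {S : Finset (Fin n) // S.card = k} → Matrix (Fin d) (Fin d) ℂ,
    (∀ S, (M S).PosSemidef) ∧ (∑ S, M S) = 1 ∧
    ∀ (S : {S : Finset (Fin n) // S.card = k}) (i : Fin n),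
      i ∉ S.val → star (ψ i) ⬝ᵥ ((M S) *ᵥ ψ i) = 0

/-- The Frobenius norm of a square complex matrix. -/
def frobNorm {m : ℕ} (A : Matrix (Fin m) (Fin m) ℂ) : ℝ :=
  Real.sqrt (∑ i, ∑ j, ‖A i j‖ ^ 2)


/-!
Every `X = ∑ vᵢ vᵢ*` in `I_k` is a combination `∑ ‖vᵢ‖² uᵢ uᵢ*` of normalized `k`-sparse pure
states with total weight `tr X ≤ 1`; putting the remaining weight on `0` shows that `I_k` lies in
the convex hull of these pure states and `0`, so its extreme points are among them.
Conversely, these points are extreme already among all positive semidefinite matrices of trace at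
most one: if `v v* = a y + b z` with `a, b > 0`, then `y` vanishes on the kernel `v^⊥` of `v v*`,
so `y` is a multiple of `v v*`, and the trace bounds force `y = v v*`. For `0` the same kernel
argument gives `y = 0`.
-/

section PosSemidef

variable {𝕜 m : Type*} [RCLike 𝕜] [Fintype m]

theorem dotProduct_star_self_eq_sum_norm_sq (v : m → 𝕜) :
    star v ⬝ᵥ v = ((∑ i, ‖v i‖ ^ 2 : ℝ) : 𝕜) := by
  simp [dotProduct, RCLike.conj_mul]

theorem Matrix.PosSemidef.mulVec_eq_zero_of_add_mulVec_eq_zero {A B : Matrix m m 𝕜}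
    (hA : A.PosSemidef) (hB : B.PosSemidef) {x : m → 𝕜} (h : (A + B) *ᵥ x = 0) :
    A *ᵥ x = 0 := by
  have hsum := ((hA.add hB).dotProduct_mulVec_zero_iff x).mpr h
  rw [add_mulVec, dotProduct_add] at hsum
  exact (hA.dotProduct_mulVec_zero_iff x).mp <|
    (add_eq_zero_iff_of_nonneg (hA.dotProduct_mulVec_nonneg x)
      (hB.dotProduct_mulVec_nonneg x)).mp hsum |>.1

theorem Matrix.PosSemidef.mulVec_eq_zero_of_mem_openSegment {X y z : Matrix m m 𝕜}
    (hy : y.PosSemidef) (hz : z.PosSemidef) (hX : X ∈ openSegment ℝ y z) {x : m → 𝕜}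
    (hx : X *ᵥ x = 0) : y *ᵥ x = 0 := by
  obtain ⟨a, b, ha, hb, -, rfl⟩ := hX
  have := (hy.smul ha.le).mulVec_eq_zero_of_add_mulVec_eq_zero (hz.smul hb.le) hx
  rwa [smul_mulVec, smul_eq_zero, or_iff_right ha.ne'] at this

theorem Matrix.IsHermitian.eq_trace_smul_vecMulVec {y : Matrix m m 𝕜} (hy : y.IsHermitian)
    {v : m → 𝕜} (hv : star v ⬝ᵥ v = 1)
    (hker : ∀ x, vecMulVec v (star v) *ᵥ x = 0 → y *ᵥ x = 0) :
    y = y.trace • vecMulVec v (star v) := by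
  classical
  set P := vecMulVec v (star v)
  have hP : P * P = P := by
    simp only [P, vecMulVec_mul_vecMulVec, hv, one_smul]
  have hyP : y * P = y := by
    suffices y * (1 - P) = 0 by rwa [mul_sub, mul_one, sub_eq_zero, eq_comm] at this
    refine ext_iff_mulVec.mpr fun x => ?_
    rw [← mulVec_mulVec, zero_mulVec]
    exact hker _ (by rw [mulVec_mulVec, mul_sub, mul_one, hP, sub_self, zero_mulVec])
  have hPy : P * y = y := by
    simpa [P, hy.eq, conjTranspose_vecMulVec] using congrArg (·ᴴ) hyP
  obtain ⟨c, rfl⟩ : ∃ c : 𝕜, y = c • P := by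
    refine ⟨(star v ᵥ* y) ⬝ᵥ v, ?_⟩
    calc y = P * y * P := by rw [mul_assoc, hyP, hPy]
      _ = _ := by rw [vecMulVec_mul, vecMulVec_mul_vecMulVec, vecMulVec_smul]
  rw [trace_smul, trace_vecMulVec, dotProduct_comm, hv, smul_eq_mul, mul_one]

variable (𝕜 m) in
def subnormalizedStates : Set (Matrix m m 𝕜) :=
  {X | X.PosSemidef ∧ RCLike.re X.trace ≤ 1}

theorem zero_mem_extremePoints_subnormalizedStates :
    (0 : Matrix m m 𝕜) ∈ (subnormalizedStates 𝕜 m).extremePoints ℝ := by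
  refine mem_extremePoints_iff_left.mpr ⟨⟨.zero, by simp⟩, fun y hy z hz h0 => ?_⟩
  refine ext_iff_mulVec.mpr fun x => ?_
  rw [zero_mulVec]
  exact hy.1.mulVec_eq_zero_of_mem_openSegment hz.1 h0 (zero_mulVec x)

theorem vecMulVec_mem_extremePoints_subnormalizedStates {v : m → 𝕜} (hv : star v ⬝ᵥ v = 1) :
    vecMulVec v (star v) ∈ (subnormalizedStates 𝕜 m).extremePoints ℝ := by
  have htrace : (vecMulVec v (star v)).trace = 1 := by
    rw [trace_vecMulVec, dotProduct_comm, hv]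
  refine mem_extremePoints_iff_left.mpr
    ⟨⟨posSemidef_vecMulVec_self_star v, by simp [htrace]⟩, fun y hy z hz hP => ?_⟩
  have hy_eq := hy.1.isHermitian.eq_trace_smul_vecMulVec hv fun x hx =>
    hy.1.mulVec_eq_zero_of_mem_openSegment hz.1 hP hx
  suffices y.trace = 1 by rw [hy_eq, this, one_smul]
  obtain ⟨a, b, ha, hb, hab, hsum⟩ := hP
  have hre : a * RCLike.re y.trace + b * RCLike.re z.trace = 1 := by
    simpa [htrace, RCLike.smul_re] using congrArg (fun X => RCLike.re X.trace) hsum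
  have him := (RCLike.nonneg_iff.mp hy.1.trace_nonneg).2
  refine RCLike.ext ?_ ?_
  · simp only [RCLike.one_re]
    nlinarith [hy.2, hz.2]
  · simp [him]

end PosSemidef

theorem sum_smul_mem_convexHull_of_zero_mem {E ι : Type*} [AddCommGroup E] [Module ℝ E]
    [Fintype ι] {s : Set E} (h0 : (0 : E) ∈ s) {c : ι → ℝ} {p : ι → E} (hc : ∀ i, 0 ≤ c i)
    (hc1 : ∑ i, c i ≤ 1) (hp : ∀ i, p i ∈ s) : ∑ i, c i • p i ∈ convexHull ℝ s := by
  have := (convex_convexHull ℝ s).sum_mem (t := (univ : Finset (Option ι)))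
    (w := fun i => i.elim (1 - ∑ i, c i) c) (z := fun i => i.elim 0 p)
    (by rintro (_ | i) -; exacts [sub_nonneg.mpr hc1, hc i]) (by simp [Fintype.sum_option])
    (by rintro (_ | i) -; exacts [subset_convexHull ℝ s h0, subset_convexHull ℝ s (hp i)])
  simpa [Fintype.sum_option] using this

section Incoherent

variable {n k : ℕ}

def incoherentPureStates (n k : ℕ) : Set (Matrix (Fin n) (Fin n) ℂ) :=
  {X | ∃ v : Fin n → ℂ, suppCard v ≤ k ∧ (∑ i, ‖v i‖ ^ 2) = 1 ∧ X = vecMulVec v (star v)}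

theorem trace_vecMulVec_self_star_re (v : Fin n → ℂ) :
    (vecMulVec v (star v)).trace.re = ∑ i, ‖v i‖ ^ 2 := by
  rw [trace_vecMulVec, dotProduct_comm, dotProduct_star_self_eq_sum_norm_sq]
  exact RCLike.ofReal_re (K := ℂ) _

theorem suppCard_smul_le (c : ℂ) (v : Fin n → ℂ) : suppCard (c • v) ≤ suppCard v :=
  card_le_card <| monotone_filter_right _ fun i _ hi h => hi (by simp [h])

theorem vecMulVec_smul_self_star (c : ℂ) (v : Fin n → ℂ) :
    vecMulVec (c • v) (star (c • v)) = (‖c‖ ^ 2 : ℝ) • vecMulVec v (star v) := by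
  rw [star_smul, smul_vecMulVec, vecMulVec_smul, smul_smul, Complex.star_def, Complex.mul_conj',
    ← Complex.coe_smul]
  push_cast; rfl

theorem KIncoherent.add {X Y : Matrix (Fin n) (Fin n) ℂ} (hX : KIncoherent k X)
    (hY : KIncoherent k Y) : KIncoherent k (X + Y) := by
  obtain ⟨p, v, hv, rfl⟩ := hX
  obtain ⟨q, w, hw, rfl⟩ := hY
  refine ⟨p + q, Fin.append v w, Fin.addCases (by simpa using hv) (by simpa using hw), ?_⟩
  simp [Fin.sum_univ_add]

theorem KIncoherent.smul {X : Matrix (Fin n) (Fin n) ℂ} (hX : KIncoherent k X) {a : ℝ}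
    (ha : 0 ≤ a) : KIncoherent k (a • X) := by
  obtain ⟨p, v, hv, rfl⟩ := hX
  refine ⟨p, fun i => (√a : ℂ) • v i, fun i => (suppCard_smul_le _ _).trans (hv i), ?_⟩
  rw [Finset.smul_sum]
  refine sum_congr rfl fun i _ => ?_
  rw [vecMulVec_smul_self_star, Complex.norm_real, Real.norm_of_nonneg (Real.sqrt_nonneg a),
    Real.sq_sqrt ha]

theorem convex_Ik : Convex ℝ (Ik n k) := by
  rintro X ⟨hX, hXk, hXtr⟩ Y ⟨hY, hYk, hYtr⟩ a b ha hb hab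
  refine ⟨(hX.smul ha).add (hY.smul hb), (hXk.smul ha).add (hYk.smul hb), ?_⟩
  simp only [trace_add, trace_smul, Complex.add_re, Complex.real_smul, Complex.re_ofReal_mul]
  nlinarith

theorem vecMulVec_mem_Ik {v : Fin n → ℂ} (hv : suppCard v ≤ k) (hv1 : ∑ i, ‖v i‖ ^ 2 ≤ 1) :
    vecMulVec v (star v) ∈ Ik n k :=
  ⟨posSemidef_vecMulVec_self_star v, ⟨1, fun _ => v, fun _ => hv, by simp⟩,
    (trace_vecMulVec_self_star_re v).trans_le hv1⟩

theorem incoherentPureStates_union_zero_subset_Ik : incoherentPureStates n k ∪ {0} ⊆ Ik n k := by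
  rintro _ (⟨v, hv, hv1, rfl⟩ | rfl)
  · exact vecMulVec_mem_Ik hv hv1.le
  · simpa using vecMulVec_mem_Ik (k := k) (v := 0) (by simp [suppCard]) (by simp)

theorem exists_vecMulVec_eq_smul {v : Fin n → ℂ} (hv : suppCard v ≤ k) :
    ∃ p ∈ incoherentPureStates n k ∪ {0}, vecMulVec v (star v) = (∑ i, ‖v i‖ ^ 2) • p := by
  set c := ∑ i, ‖v i‖ ^ 2
  rcases (sum_nonneg fun i _ => sq_nonneg ‖v i‖ : 0 ≤ c).eq_or_lt with hc | hc
  · have : v = 0 := by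
      rw [← dotProduct_star_self_eq_zero, dotProduct_star_self_eq_sum_norm_sq, ← hc]
      simp
    exact ⟨0, Or.inr rfl, by simp [this]⟩
  have hnorm : ‖(((√c)⁻¹ : ℝ) : ℂ)‖ ^ 2 = c⁻¹ := by
    rw [Complex.norm_real, Real.norm_of_nonneg (by positivity), inv_pow, Real.sq_sqrt hc.le]
  refine ⟨_, Or.inl ⟨(((√c)⁻¹ : ℝ) : ℂ) • v, (suppCard_smul_le _ _).trans hv, ?_, rfl⟩, ?_⟩
  · simp only [Pi.smul_apply, smul_eq_mul, norm_mul, mul_pow, ← mul_sum, hnorm]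
    exact inv_mul_cancel₀ hc.ne'
  · rw [vecMulVec_smul_self_star, hnorm, smul_smul, mul_inv_cancel₀ hc.ne', one_smul]

theorem Ik_subset_convexHull : Ik n k ⊆ convexHull ℝ (incoherentPureStates n k ∪ {0}) := by
  rintro X ⟨-, ⟨p, v, hv, rfl⟩, htr⟩
  choose q hq hvq using fun i => exists_vecMulVec_eq_smul (hv i)
  simp only [hvq]
  refine sum_smul_mem_convexHull_of_zero_mem (Set.mem_union_right _ (Set.mem_singleton 0))
    (fun i => sum_nonneg fun j _ => sq_nonneg _) ?_ hq
  simpa only [trace_sum, Complex.re_sum, trace_vecMulVec_self_star_re] using htr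

theorem Ik_subset_subnormalizedStates : Ik n k ⊆ subnormalizedStates ℂ (Fin n) :=
  fun _ hX => ⟨hX.1, hX.2.2⟩

theorem incoherentPureStates_union_zero_subset_extremePoints_Ik :
    incoherentPureStates n k ∪ {0} ⊆ (Ik n k).extremePoints ℝ := by
  refine fun X hX => inter_extremePoints_subset_extremePoints_of_subset
    Ik_subset_subnormalizedStates ⟨incoherentPureStates_union_zero_subset_Ik hX, ?_⟩
  rcases hX with ⟨v, -, hv1, rfl⟩ | rfl
  · refine vecMulVec_mem_extremePoints_subnormalizedStates ?_
    rw [dotProduct_star_self_eq_sum_norm_sq, hv1, RCLike.ofReal_one]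
  · exact zero_mem_extremePoints_subnormalizedStates

end Incoherent

theorem extremePoints_Ik_general (n k : ℕ) :
    Set.extremePoints ℝ (Ik n k) =
      {X : Matrix (Fin n) (Fin n) ℂ | ∃ v : Fin n → ℂ,
        suppCard v ≤ k ∧ (∑ i, ‖v i‖ ^ 2) = 1 ∧ X = vecMulVec v (star v)} ∪ {0} := by
  refine Set.Subset.antisymm (fun X hX => ?_)
    incoherentPureStates_union_zero_subset_extremePoints_Ik
  have hull_subset : convexHull ℝ (incoherentPureStates n k ∪ {0}) ⊆ Ik n k :=
    convexHull_min incoherentPureStates_union_zero_subset_Ik convex_Ik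
  exact extremePoints_convexHull_subset <| inter_extremePoints_subset_extremePoints_of_subset
    hull_subset ⟨Ik_subset_convexHull hX.1, hX⟩

/-- The extreme points of `I_k` are exactly `0` together with the rank-one matrices `v v*`
for unit vectors `v` having at most `k` nonzero entries. -/
theorem extremePoints_Ik (n k : ℕ) (hn : 0 < n) (hk : 1 ≤ k) (hkn : k ≤ n) :
    Set.extremePoints ℝ (Ik n k) =
      {X : Matrix (Fin n) (Fin n) ℂ | ∃ v : Fin n → ℂ,
        suppCard v ≤ k ∧ (∑ i, ‖v i‖ ^ 2) = 1 ∧ X = vecMulVec v (star v)} ∪ {0} :=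
  extremePoints_Ik_general n k
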